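/- Let f ∈ P([a,b]) and x ∈ P_c(n,f) with x ∈ (a,b). If x is non-critical and unstable, then x is trapped. -/

import Mathlib

/-- The set of discontinuity points of `f` in `(a,b)` (relative to `[a,b]`). -/
def DiscPts (a b : ℝ) (f : ℝ → ℝ) : Set ℝ :=
  {x | x ∈ Set.Ioo a b ∧ ¬ ContinuousWithinAt f (Set.Icc a b) x}

/-- The set of turning points of `f` in `(a,b)`: interior points of continuity such that
`f` is monotone on no neighborhood of the point. -/
def TurnPts (a b : ℝ) (f : ℝ → ℝ) : Set ℝ :=
  {x | x ∈ Set.Ioo a b ∧ ContinuousWithinAt f (Set.Icc a b) x ∧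
    ∀ J ∈ nhds x, ¬ MonotoneOn f (J ∩ Set.Icc a b) ∧ ¬ AntitoneOn f (J ∩ Set.Icc a b)}

/-- The special points `S(f) = D(f) ∪ T(f)`. -/
def SpecPts (a b : ℝ) (f : ℝ → ℝ) : Set ℝ := DiscPts a b f ∪ TurnPts a b f

/-- `f ∈ P([a,b])`: a well-behaved piecewise continuous map of `[a,b]`: it has finitely many
special points, is continuous and strictly monotone on each interval avoiding the special
points, has one-sided limits everywhere, and is continuous at `a` and at `b`. -/
structure WellBehaved (a b : ℝ) (f : ℝ → ℝ) : Prop where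
  lt : a < b
  mapsTo : Set.MapsTo f (Set.Icc a b \ DiscPts a b f) (Set.Icc a b)
  finite_spec : (SpecPts a b f).Finite
  piecewise : ∀ u v : ℝ, a ≤ u → u < v → v ≤ b →
    (∀ s ∈ SpecPts a b f, s ∉ Set.Ioo u v) →
    ContinuousOn f (Set.Ioo u v) ∧
      (StrictMonoOn f (Set.Ioo u v) ∨ StrictAntiOn f (Set.Ioo u v))
  right_lims : ∀ x ∈ Set.Ico a b, ∃ L : ℝ, Filter.Tendsto f (nhdsWithin x (Set.Ioi x)) (nhds L)
  left_lims : ∀ x ∈ Set.Ioc a b, ∃ L : ℝ, Filter.Tendsto f (nhdsWithin x (Set.Iio x)) (nhds L)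
  cont_a : ContinuousWithinAt f (Set.Icc a b) a
  cont_b : ContinuousWithinAt f (Set.Icc a b) b

/-- Iterated image of a set, regarding `f` as undefined on its discontinuity set:
`f⁰(A) = A` and `f^{m+1}(A) = f (fᵐ(A) \ D(f))`. -/
def pcIter (a b : ℝ) (f : ℝ → ℝ) : ℕ → Set ℝ → Set ℝ
  | 0, A => A
  | m + 1, A => f '' (pcIter a b f m A \ DiscPts a b f)

/-- `|fᵐ(J)| → 0` as `m → ∞`. -/
def lengthTendsToZero (a b : ℝ) (f : ℝ → ℝ) (J : Set ℝ) : Prop :=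
  Filter.Tendsto (fun m => MeasureTheory.volume (pcIter a b f m J)) Filter.atTop (nhds 0)

/-- A nontrivial (two-sided) neighborhood of `x` inside `[a,b]`. -/
def IsFullNbhd (a b x : ℝ) (J : Set ℝ) : Prop :=
  J ⊆ Set.Icc a b ∧ ∃ u v : ℝ, u < x ∧ x < v ∧ J = Set.Icc u v

/-- A nontrivial lateral neighborhood of `x` inside `[a,b]`: an interval of positive length
having `x` as an endpoint. -/
def IsLatNbhd (a b x : ℝ) (J : Set ℝ) : Prop :=
  J ⊆ Set.Icc a b ∧
    ((∃ v : ℝ, x < v ∧ J = Set.Icc x v) ∨ (∃ u : ℝ, u < x ∧ J = Set.Icc u x))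

/-- `x` is stable for `f`. -/
def Stable (a b : ℝ) (f : ℝ → ℝ) (x : ℝ) : Prop :=
  ∃ J : Set ℝ, IsFullNbhd a b x J ∧ lengthTendsToZero a b f J

/-- `x` is semi-stable for `f`. -/
def SemiStable (a b : ℝ) (f : ℝ → ℝ) (x : ℝ) : Prop :=
  ¬ Stable a b f x ∧ ∃ J : Set ℝ, IsLatNbhd a b x J ∧ lengthTendsToZero a b f J

/-- `x` is unstable for `f`. -/
def Unstable (a b : ℝ) (f : ℝ → ℝ) (x : ℝ) : Prop :=
  ¬ Stable a b f x ∧ ¬ SemiStable a b f x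

/-- A variant of `f`: agrees with `f` off `D(f)` and takes a one-sided limit value at
each discontinuity point. -/
def IsVariant (a b : ℝ) (f g : ℝ → ℝ) : Prop :=
  (∀ x, x ∉ DiscPts a b f → g x = f x) ∧
  ∀ w ∈ DiscPts a b f, g w = Function.rightLim f w ∨ g w = Function.leftLim f w

/-- The structure `O((x))` of a point `x`. -/
def Struct (a b : ℝ) (f : ℝ → ℝ) (x : ℝ) : Set ℝ :=
  {y | ∃ g : ℝ → ℝ, IsVariant a b f g ∧ ∃ n : ℕ, g^[n] x = y}

/-- `x ∈ C(f)`: the structure of `x` is closed (finite); `[[x]]` is then `Struct a b f x`. -/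
def Confined (a b : ℝ) (f : ℝ → ℝ) (x : ℝ) : Prop := (Struct a b f x).Finite

/-- Level 1 connection `y ∼₁ z`. -/
def Conn1 (a b : ℝ) (f : ℝ → ℝ) (y z : ℝ) : Prop :=
  ∃ (k : ℕ) (I : Set ℝ), IsLatNbhd a b y I ∧ IsLatNbhd a b z (pcIter a b f k I)

/-- Level 2 connection `y ∼₂ z`. -/
def Conn2 (a b : ℝ) (f : ℝ → ℝ) (y z : ℝ) : Prop :=
  ∃ (k₁ k₂ : ℕ) (I : Set ℝ), IsLatNbhd a b y I ∧
    IsLatNbhd a b z (pcIter a b f k₁ I) ∧ IsLatNbhd a b z (pcIter a b f k₂ I) ∧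
    IsFullNbhd a b z (pcIter a b f k₁ I ∪ pcIter a b f k₂ I)

/-- Level 3 connection `y ∼₃ z`. -/
def Conn3 (a b : ℝ) (f : ℝ → ℝ) (y z : ℝ) : Prop :=
  ∃ (k₁ k₂ : ℕ) (u v : ℝ), u < y ∧ y < v ∧ Set.Icc u v ⊆ Set.Icc a b ∧
    IsLatNbhd a b z (pcIter a b f k₁ (Set.Icc u y)) ∧
    IsLatNbhd a b z (pcIter a b f k₂ (Set.Icc y v)) ∧
    IsLatNbhd a b z (pcIter a b f k₁ (Set.Icc u y) ∪ pcIter a b f k₂ (Set.Icc y v))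

/-- Level 4 connection `y ∼₄ z`. -/
def Conn4 (a b : ℝ) (f : ℝ → ℝ) (y z : ℝ) : Prop :=
  ∃ (k₁ k₂ : ℕ) (u v : ℝ), u < y ∧ y < v ∧ Set.Icc u v ⊆ Set.Icc a b ∧
    IsLatNbhd a b z (pcIter a b f k₁ (Set.Icc u y)) ∧
    IsLatNbhd a b z (pcIter a b f k₂ (Set.Icc y v)) ∧
    IsFullNbhd a b z (pcIter a b f k₁ (Set.Icc u y) ∪ pcIter a b f k₂ (Set.Icc y v))

/-- `x ∈ P_c(n,f)`: a continuous periodic point of (minimal) period `n`, whose iterates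
never meet the discontinuity set. -/
def PerC (a b : ℝ) (f : ℝ → ℝ) (n : ℕ) (x : ℝ) : Prop :=
  x ∈ Set.Icc a b ∧ 1 ≤ n ∧ f^[n] x = x ∧ (∀ k, 0 < k → k < n → f^[k] x ≠ x) ∧
  ∀ m : ℕ, f^[m] x ∉ DiscPts a b f

/-- `x ∈ P_c(n,f)` is critical when its orbit contains a turning point. -/
def CriticalPt (a b : ℝ) (f : ℝ → ℝ) (n : ℕ) (x : ℝ) : Prop :=
  ∃ k < n, f^[k] x ∈ TurnPts a b f

/-- `x ∈ P_c(n,f)` (non-critical) is trapped. -/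
def Trapped (a b : ℝ) (f : ℝ → ℝ) (n : ℕ) (x : ℝ) : Prop :=
  ∃ U ∈ nhds x, U ⊆ Set.Icc a b ∧
    (∀ j ≤ 2 * n, ContinuousOn (f^[j]) U ∧
      (StrictMonoOn (f^[j]) U ∨ StrictAntiOn (f^[j]) U)) ∧
    ∃ y ∈ U, ∃ z ∈ U, ∃ δ : ℝ, 0 < δ ∧ y < x ∧ x < z ∧
      StrictMonoOn (f^[2 * n]) (Set.Icc (y - δ) (z + δ)) ∧
      f^[2 * n] y ≤ y ∧ z ≤ f^[2 * n] z

/-- `x ∈ P_c(n,f)` is free: neither critical nor trapped, with orbit inside `(a,b)`. -/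
def Free (a b : ℝ) (f : ℝ → ℝ) (n : ℕ) (x : ℝ) : Prop :=
  ¬ CriticalPt a b f n x ∧ ¬ Trapped a b f n x ∧ ∀ k < n, f^[k] x ∈ Set.Ioo a b

/-- Auxiliary conditions of an exceptional orbit of type (c), for the point `x` of the
period-two orbit with `x < f x`. -/
def ExceptionalC (a b : ℝ) (f : ℝ → ℝ) (x : ℝ) : Prop :=
  ContinuousOn f (Set.Icc a x) ∧ StrictAntiOn f (Set.Icc a x) ∧
  ContinuousOn f (Set.Icc (f x) b) ∧ StrictAntiOn f (Set.Icc (f x) b) ∧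
  ∀ z ∈ Set.Ioo a x, z < f^[2] z

/-- `[x]` is an exceptional orbit for `f` (with `x ∈ P_c(n,f)`). -/
def Exceptional (a b : ℝ) (f : ℝ → ℝ) (n : ℕ) (x : ℝ) : Prop :=
  (n = 1 ∧ f x = x ∧ ContinuousOn f (Set.Icc x b) ∧ StrictMonoOn f (Set.Icc x b) ∧
    ∀ z ∈ Set.Ioo x b, f z < z) ∨
  (n = 1 ∧ f x = x ∧ ContinuousOn f (Set.Icc a x) ∧ StrictMonoOn f (Set.Icc a x) ∧
    ∀ z ∈ Set.Ioo a x, z < f z) ∨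
  (n = 2 ∧ ((x < f x ∧ ExceptionalC a b f x) ∨ (f x < x ∧ ExceptionalC a b f (f x))))

/-- `y ∈ A([x],f)`, the set of points attracted by the orbit of `x ∈ P_c(n,f)`. -/
def Attracted (a b : ℝ) (f : ℝ → ℝ) (n : ℕ) (x y : ℝ) : Prop :=
  y ∈ Set.Icc a b ∧
    ∃ k < n, Filter.Tendsto (fun m => f^[m * n] y) Filter.atTop (nhds (f^[k] x))

/-- A basic interval: a nontrivial closed interval whose endpoints are special points of `f`
or endpoints of `[a,b]`, containing no special point in its interior. -/
def BasicInterval (a b : ℝ) (f : ℝ → ℝ) (J : Set ℝ) : Prop :=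
  ∃ u v : ℝ, u < v ∧ J = Set.Icc u v ∧
    (u = a ∨ u ∈ SpecPts a b f) ∧ (v = b ∨ v ∈ SpecPts a b f) ∧
    ∀ s ∈ SpecPts a b f, s ∉ Set.Ioo u v

/-- `w ∈ S(f)` is regular: the (one-sided) image of `w` lies in `G(f)` and one of the
codes of `w` is periodic. -/
def RegularPt (a b : ℝ) (f : ℝ → ℝ) (w : ℝ) : Prop :=
  w ∈ SpecPts a b f ∧ ∃ g : ℝ → ℝ, IsVariant a b f g ∧ g w ∈ Set.Icc a b ∧
    (∀ m : ℕ, g^[m] (g w) ∉ SpecPts a b f) ∧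
    ∃ σ : ℕ → Set ℝ, (∀ m, BasicInterval a b f (σ m) ∧ g^[m] w ∈ σ m) ∧
      ∃ p : ℕ, 1 ≤ p ∧ ∀ m, σ (m + p) = σ m

open Set Filter Topology Function MeasureTheory

/-!
Near the orbit of a non-critical continuous periodic point every iterate `f^[j]`, `j ≤ 2n`, is a
continuous injective, hence strictly monotone, map of a small interval around `x`; so
`G = f^[2n] = f^[n] ∘ f^[n]` is continuous and strictly increasing near `x`, with `G x = x`.
If `G z < z` held on a whole right neighbourhood `(x, c]`, the decreasing orbit `G^q c` would
converge to a fixed point of `G`, necessarily `x`, so the sets `G^q [x, c]` would shrink to `x`.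
By continuity of the finitely many `f^[r]`, `r < 2n`, at `x`, all the images `f^m [x, c]` would
then have lengths tending to `0`, and `x` would be semi-stable. Hence some `z > x` has
`z ≤ G z`, and symmetrically some `y < x` has `G y ≤ y`.
-/

section Order

variable {α β : Type*} [LinearOrder α] [TopologicalSpace α] [OrderTopology α] [DenselyOrdered α]
  [LinearOrder β] [TopologicalSpace β] [OrderClosedTopology β] {f : α → β} {u v : α}

theorem MonotoneOn.Icc_of_Ioo (hc : ContinuousOn f (Icc u v)) (hm : MonotoneOn f (Ioo u v)) :
    MonotoneOn f (Icc u v) := by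
  have hleft : ∀ t ∈ Ioo u v, ∀ s ∈ Icc u t, f s ≤ f t := by
    intro t ht s hs
    refine ContinuousWithinAt.closure_le (s := Ioo u t) (g := fun _ => f t) ?_ ?_
      continuousWithinAt_const fun y hy => hm ⟨hy.1, hy.2.trans ht.2⟩ ht hy.2.le
    · rwa [closure_Ioo ht.1.ne]
    · exact (hc s ⟨hs.1, hs.2.trans ht.2.le⟩).mono
        (Ioo_subset_Icc_self.trans (Icc_subset_Icc le_rfl ht.2.le))
  intro s hs t ht hst
  rcases hst.eq_or_lt with rfl | hst
  · rfl
  refine ContinuousWithinAt.closure_le (s := Ioo s v) (f := fun _ => f s) ?_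
    continuousWithinAt_const ?_ fun y hy => hleft y ⟨hs.1.trans_lt hy.1, hy.2⟩ s ⟨hs.1, hy.1.le⟩
  · rw [closure_Ioo (hst.trans_le ht.2).ne]; exact ⟨hst.le, ht.2⟩
  · exact (hc t ht).mono (Ioo_subset_Icc_self.trans (Icc_subset_Icc hs.1 le_rfl))

theorem StrictMonoOn.Icc_of_Ioo (hc : ContinuousOn f (Icc u v)) (hm : StrictMonoOn f (Ioo u v)) :
    StrictMonoOn f (Icc u v) := by
  intro s hs t ht hst
  obtain ⟨c, hsc, hct⟩ := exists_between hst
  obtain ⟨d, hcd, hdt⟩ := exists_between hct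
  have hc' : c ∈ Ioo u v := ⟨hs.1.trans_lt hsc, hct.trans_le ht.2⟩
  have hd' : d ∈ Ioo u v := ⟨hc'.1.trans hcd, hdt.trans_le ht.2⟩
  have hmono := hm.monotoneOn.Icc_of_Ioo hc
  calc f s ≤ f c := hmono hs (Ioo_subset_Icc_self hc') hsc.le
    _ < f d := hm hc' hd' hcd
    _ ≤ f t := hmono (Ioo_subset_Icc_self hd') ht hdt.le

theorem StrictAntiOn.Icc_of_Ioo (hc : ContinuousOn f (Icc u v)) (hm : StrictAntiOn f (Ioo u v)) :
    StrictAntiOn f (Icc u v) :=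
  StrictMonoOn.Icc_of_Ioo (β := βᵒᵈ) hc hm

end Order

theorem exists_Icc_strictMonoOn_comp_self {g : ℝ → ℝ} {x ε : ℝ} (hε : 0 < ε) (hgx : g x = x)
    (hc : ContinuousOn g (Icc (x - ε) (x + ε)))
    (hm : StrictMonoOn g (Icc (x - ε) (x + ε)) ∨ StrictAntiOn g (Icc (x - ε) (x + ε))) :
    ∃ ρ > 0, Icc (x - ρ) (x + ρ) ⊆ Icc (x - ε) (x + ε) ∧
      StrictMonoOn (g ∘ g) (Icc (x - ρ) (x + ρ)) := by
  have hI : Icc (x - ε) (x + ε) ∈ 𝓝 x := Icc_mem_nhds (by linarith) (by linarith)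
  have hpre : g ⁻¹' Icc (x - ε) (x + ε) ∈ 𝓝 x :=
    (hc.continuousAt hI).preimage_mem_nhds (hgx.symm ▸ hI)
  obtain ⟨ρ, hρ, hsub⟩ := (nhds_basis_Icc_pos x).mem_iff.1 (inter_mem hI hpre)
  have hmaps : MapsTo g (Icc (x - ρ) (x + ρ)) (Icc (x - ε) (x + ε)) := fun _ hy => (hsub hy).2
  have hρε : Icc (x - ρ) (x + ρ) ⊆ Icc (x - ε) (x + ε) := fun _ hy => (hsub hy).1
  refine ⟨ρ, hρ, hρε, ?_⟩
  rcases hm with hm | hm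
  · exact hm.comp (hm.mono hρε) hmaps
  · exact hm.comp (hm.mono hρε) hmaps

section Germs

variable {X : Type*} [TopologicalSpace X] {s : Set X}

/-- Neighbourhoods are taken within `s` since orbit points may be endpoints of `[a,b]`, where `f`
is only controlled from one side. -/
def ContInjNear (s : Set X) (f : X → X) (p : X) : Prop :=
  ∃ U ∈ 𝓝[s] p, MapsTo f U s ∧ ContinuousOn f U ∧ InjOn f U

theorem contInjNear_id (p : X) : ContInjNear s id p :=
  ⟨s, self_mem_nhdsWithin, mapsTo_id s, continuousOn_id, injOn_id s⟩

theorem ContInjNear.comp {f g : X → X} {p : X} (hg : ContInjNear s g (f p))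
    (hf : ContInjNear s f p) (hp : p ∈ s) : ContInjNear s (g ∘ f) p := by
  obtain ⟨V, hV, hVs, hgc, hgi⟩ := hg
  obtain ⟨U, hU, hUs, hfc, hfi⟩ := hf
  have hfV : f ⁻¹' V ∈ 𝓝[s] p :=
    nhdsWithin_le_of_mem hU ((hfc p (mem_of_mem_nhdsWithin hp hU)).tendsto_nhdsWithin hUs hV)
  have hUV : MapsTo f (U ∩ f ⁻¹' V) V := fun y hy => hy.2
  exact ⟨U ∩ f ⁻¹' V, inter_mem hU hfV, hVs.comp hUV,
    hgc.comp (hfc.mono inter_subset_left) hUV, hgi.comp (hfi.mono inter_subset_left) hUV⟩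

theorem ContInjNear.iterate {f : X → X} {p : X} (h : ∀ k, ContInjNear s f (f^[k] p))
    (hmem : ∀ k, f^[k] p ∈ s) : ∀ i, ContInjNear s f^[i] p
  | 0 => contInjNear_id p
  | i + 1 => by
    rw [iterate_succ']
    exact ContInjNear.comp (h i) (ContInjNear.iterate h hmem i) (hmem 0)

end Germs

section Contraction

variable {α : Type*} [ConditionallyCompleteLinearOrder α] {G : α → α} {x c : α}

theorem apply_le_self_of_lt_self (hGx : G x = x) (hlt : ∀ z ∈ Ioc x c, G z < z) {z : α}
    (hz : z ∈ Icc x c) : G z ≤ z :=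
  hz.1.eq_or_lt.elim (fun h => h ▸ hGx.le) fun h => (hlt z ⟨h, hz.2⟩).le

theorem mapsTo_Icc_of_lt_self (hxc : x ≤ c) (hm : MonotoneOn G (Icc x c)) (hGx : G x = x)
    (hlt : ∀ z ∈ Ioc x c, G z < z) : MapsTo G (Icc x c) (Icc x c) := fun _ hz =>
  ⟨hGx ▸ hm ⟨le_rfl, hxc⟩ hz hz.1, (apply_le_self_of_lt_self hGx hlt hz).trans hz.2⟩

variable [TopologicalSpace α] [OrderTopology α]

theorem tendsto_iterate_of_lt_self (hxc : x ≤ c) (hc : ContinuousOn G (Icc x c))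
    (hm : MonotoneOn G (Icc x c)) (hGx : G x = x) (hlt : ∀ z ∈ Ioc x c, G z < z) :
    Tendsto (fun q => G^[q] c) atTop (𝓝 x) := by
  set d : ℕ → α := fun q => G^[q] c
  have hd : ∀ q, d q ∈ Icc x c := fun q =>
    (mapsTo_Icc_of_lt_self hxc hm hGx hlt).iterate q ⟨hxc, le_rfl⟩
  have hdsucc : ∀ q, d (q + 1) = G (d q) := fun q => iterate_succ_apply' G q c
  have hanti : Antitone d := antitone_nat_of_succ_le fun q =>
    (hdsucc q).trans_le (apply_le_self_of_lt_self hGx hlt (hd q))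
  have hlim : Tendsto d atTop (𝓝 (⨅ q, d q)) :=
    tendsto_atTop_ciInf hanti ⟨x, forall_mem_range.2 fun q => (hd q).1⟩
  set ℓ := ⨅ q, d q
  have hℓ : ℓ ∈ Icc x c := isClosed_Icc.mem_of_tendsto hlim (Eventually.of_forall hd)
  have hfix : G ℓ = ℓ := by
    have hGd : Tendsto (G ∘ d) atTop (𝓝 (G ℓ)) :=
      (hc ℓ hℓ).tendsto.comp (tendsto_nhdsWithin_iff.2 ⟨hlim, Eventually.of_forall hd⟩)
    refine tendsto_nhds_unique hGd ?_
    simpa only [comp_def, ← hdsucc] using (tendsto_add_atTop_iff_nat 1).2 hlim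
  obtain rfl : ℓ = x := hℓ.1.eq_or_lt.elim Eq.symm fun h => absurd hfix (hlt ℓ ⟨h, hℓ.2⟩).ne
  exact hlim

theorem tendsto_image_iterate_Icc_smallSets (hxc : x ≤ c) (hc : ContinuousOn G (Icc x c))
    (hm : MonotoneOn G (Icc x c)) (hGx : G x = x) (hlt : ∀ z ∈ Ioc x c, G z < z) :
    Tendsto (fun q => G^[q] '' Icc x c) atTop (𝓝 x).smallSets := by
  have hmaps := mapsTo_Icc_of_lt_self hxc hm hGx hlt
  have himage : ∀ q, G^[q] '' Icc x c ⊆ Icc x (G^[q] c) := by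
    intro q
    induction q with
    | zero => simp
    | succ q ih =>
      have hq : G^[q] c ∈ Icc x c := hmaps.iterate q ⟨hxc, le_rfl⟩
      rw [iterate_succ', image_comp]
      calc G '' (G^[q] '' Icc x c) ⊆ G '' Icc x (G^[q] c) := image_mono ih
        _ ⊆ Icc (G x) (G (G^[q] c)) := (hm.mono (Icc_subset_Icc le_rfl hq.2)).image_Icc_subset
        _ = Icc x (G (G^[q] c)) := by rw [hGx]
  exact (tendsto_const_nhds.Icc (tendsto_iterate_of_lt_self hxc hc hm hGx hlt)).smallSets_mono
    (Eventually.of_forall himage)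

theorem tendsto_image_iterate_Icc_smallSets' (hcx : c ≤ x) (hc : ContinuousOn G (Icc c x))
    (hm : MonotoneOn G (Icc c x)) (hGx : G x = x) (hlt : ∀ z ∈ Ico c x, z < G z) :
    Tendsto (fun q => G^[q] '' Icc c x) atTop (𝓝 x).smallSets := by
  have h := tendsto_image_iterate_Icc_smallSets (α := αᵒᵈ)
    (G := OrderDual.toDual ∘ G ∘ OrderDual.ofDual) (x := OrderDual.toDual x)
    (c := OrderDual.toDual c) hcx
  rw [Icc_toDual, Ioc_toDual] at h
  exact h hc hm.dual hGx hlt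

end Contraction

theorem Filter.tendsto_of_forall_tendsto_mul_add {β : Type*} {u : ℕ → β} {l : Filter β} {p : ℕ}
    (hp : 0 < p) (h : ∀ r < p, Tendsto (fun q => u (p * q + r)) atTop l) : Tendsto u atTop l := by
  intro s hs
  have hall : ∀ᶠ q in atTop, ∀ r ∈ {r | r < p}, u (p * q + r) ∈ s :=
    (eventually_all_finite (finite_lt_nat p)).2 fun r hr => h r hr hs
  obtain ⟨Q, hQ⟩ := eventually_atTop.1 hall
  refine mem_map.2 (mem_atTop_sets.2 ⟨p * Q, fun m hm => ?_⟩)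
  rw [mem_preimage, ← Nat.div_add_mod m p]
  exact hQ _ ((Nat.le_div_iff_mul_le hp).2 (by rwa [mul_comm])) _ (Nat.mod_lt m hp)

theorem tendsto_measure_of_tendsto_smallSets {X ι : Type*} [MetricSpace X] [ProperSpace X]
    [MeasurableSpace X] [OpensMeasurableSpace X] {μ : Measure X} [IsFiniteMeasureOnCompacts μ]
    [NullSingletonClass μ] {l : Filter ι} {B : ι → Set X} {y : X}
    (hB : Tendsto B l (𝓝 y).smallSets) : Tendsto (fun i => μ (B i)) l (𝓝 0) := by
  have hball := tendsto_measure_cthickening_of_isCompact (μ := μ) (isCompact_singleton (x := y))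
  rw [measure_singleton] at hball
  rw [ENNReal.tendsto_nhds_zero]
  intro ε hε
  obtain ⟨r, hrε, hr⟩ :=
    (((hball.mono_left nhdsWithin_le_nhds).eventually (ge_mem_nhds hε)).and
      (self_mem_nhdsWithin (s := Ioi 0))).exists
  rw [Metric.cthickening_singleton y (le_of_lt hr)] at hrε
  filter_upwards [hB.eventually (eventually_smallSets_subset.2 (Metric.closedBall_mem_nhds y hr))]
    with i hi using (measure_mono hi).trans hrε

theorem pcIter_subset_image_iterate (a b : ℝ) (f : ℝ → ℝ) :
    ∀ (m : ℕ) (A : Set ℝ), pcIter a b f m A ⊆ f^[m] '' A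
  | 0, A => by simp [pcIter]
  | m + 1, A => by
    rw [iterate_succ', image_comp]
    exact image_mono (sdiff_subset.trans (pcIter_subset_image_iterate a b f m A))

theorem lengthTendsToZero_of_tendsto_smallSets {a b x : ℝ} {f : ℝ → ℝ} {p : ℕ} {J : Set ℝ}
    (hp : 0 < p) (hcont : ∀ r < p, ContinuousAt f^[r] x)
    (hJ : Tendsto (fun q => (f^[p])^[q] '' J) atTop (𝓝 x).smallSets) :
    lengthTendsToZero a b f J := by
  have himage : Tendsto (fun m => volume (f^[m] '' J)) atTop (𝓝 0) := by
    refine tendsto_of_forall_tendsto_mul_add hp fun r hr => ?_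
    simp_rw [add_comm _ r, iterate_add, iterate_mul, image_comp]
    exact tendsto_measure_of_tendsto_smallSets ((hcont r hr).tendsto.image_smallSets.comp hJ)
  exact tendsto_of_tendsto_of_tendsto_of_le_of_le tendsto_const_nhds himage (fun _ => zero_le)
    fun m => measure_mono (pcIter_subset_image_iterate a b f m J)

theorem Unstable.not_lengthTendsToZero {a b x : ℝ} {f : ℝ → ℝ} (hu : Unstable a b f x)
    {J : Set ℝ} (hJ : IsLatNbhd a b x J) : ¬ lengthTendsToZero a b f J :=
  fun h => hu.2 ⟨hu.1, J, hJ, h⟩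

theorem Unstable.exists_trapping_points {a b x ρ : ℝ} {f : ℝ → ℝ} {p : ℕ}
    (hu : Unstable a b f x) (hp : 0 < p) (hcont : ∀ r < p, ContinuousAt f^[r] x) (hρ : 0 < ρ)
    (hsub : Icc (x - ρ) (x + ρ) ⊆ Icc a b) (hGc : ContinuousOn f^[p] (Icc (x - ρ) (x + ρ)))
    (hGm : MonotoneOn f^[p] (Icc (x - ρ) (x + ρ))) (hGx : f^[p] x = x) :
    ∃ y ∈ Ico (x - ρ) x, ∃ z ∈ Ioc x (x + ρ), f^[p] y ≤ y ∧ z ≤ f^[p] z := by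
  have hleft : Icc (x - ρ) x ⊆ Icc (x - ρ) (x + ρ) := Icc_subset_Icc le_rfl (by linarith)
  have hright : Icc x (x + ρ) ⊆ Icc (x - ρ) (x + ρ) := Icc_subset_Icc (by linarith) le_rfl
  obtain ⟨y, hy, hyG⟩ : ∃ y ∈ Ico (x - ρ) x, f^[p] y ≤ y := by
    by_contra! hlt
    exact hu.not_lengthTendsToZero ⟨hleft.trans hsub, Or.inr ⟨_, by linarith, rfl⟩⟩ <|
      lengthTendsToZero_of_tendsto_smallSets hp hcont <|
        tendsto_image_iterate_Icc_smallSets' (by linarith) (hGc.mono hleft) (hGm.mono hleft) hGx hlt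
  obtain ⟨z, hz, hzG⟩ : ∃ z ∈ Ioc x (x + ρ), z ≤ f^[p] z := by
    by_contra! hlt
    exact hu.not_lengthTendsToZero ⟨hright.trans hsub, Or.inl ⟨_, by linarith, rfl⟩⟩ <|
      lengthTendsToZero_of_tendsto_smallSets hp hcont <|
        tendsto_image_iterate_Icc_smallSets (by linarith) (hGc.mono hright) (hGm.mono hright) hGx
          hlt
  exact ⟨y, hy, z, hz, hyG, hzG⟩

namespace WellBehaved

variable {a b : ℝ} {f : ℝ → ℝ}

theorem continuousWithinAt (hf : WellBehaved a b f) {y : ℝ} (hy : y ∈ Icc a b)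
    (hd : y ∉ DiscPts a b f) : ContinuousWithinAt f (Icc a b) y := by
  rcases hy.1.eq_or_lt with rfl | hay
  · exact hf.cont_a
  rcases hy.2.eq_or_lt with rfl | hyb
  · exact hf.cont_b
  · exact not_not.1 fun h => hd ⟨⟨hay, hyb⟩, h⟩

theorem contInjNear (hf : WellBehaved a b f) {p : ℝ} (hp : p ∈ Icc a b)
    (hps : p ∉ SpecPts a b f) : ContInjNear (Icc a b) f p := by
  obtain ⟨r, hr, hrS⟩ := (nhds_basis_Icc_pos p).mem_iff.1
    (hf.finite_spec.isClosed.isOpen_compl.mem_nhds hps)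
  have hIcc : Icc a b ∩ Icc (p - r) (p + r) = Icc (max a (p - r)) (min b (p + r)) :=
    Icc_inter_Icc
  set u := max a (p - r)
  set v := min b (p + r)
  have huv : u < v := by
    simp only [u, v, max_lt_iff, lt_min_iff]
    refine ⟨⟨?_, ?_⟩, ?_, ?_⟩ <;> linarith [hf.lt, hp.1, hp.2]
  have hsub : Icc u v ⊆ Icc a b := hIcc ▸ inter_subset_left
  have hS : ∀ y ∈ Icc u v, y ∉ SpecPts a b f := fun y hy => hrS (hIcc ▸ hy).2
  have hcont : ContinuousOn f (Icc u v) := fun y hy =>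
    (hf.continuousWithinAt (hsub hy) fun hd => hS y hy (Or.inl hd)).mono hsub
  have hmono := (hf.piecewise u v (le_max_left _ _) huv (min_le_left _ _)
    fun s hs hsuv => hS s (Ioo_subset_Icc_self hsuv) hs).2
  refine ⟨Icc u v, hIcc ▸ inter_mem_nhdsWithin _ (Icc_mem_nhds (by linarith) (by linarith)),
    fun y hy => hf.mapsTo ⟨hsub hy, fun hd => hS y hy (Or.inl hd)⟩, hcont, ?_⟩
  rcases hmono with hmono | hanti
  · exact (hmono.Icc_of_Ioo hcont).injOn
  · exact (hanti.Icc_of_Ioo hcont).injOn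

end WellBehaved

namespace PerC

variable {a b x : ℝ} {f : ℝ → ℝ} {n : ℕ}

theorem isPeriodicPt (hx : PerC a b f n x) : IsPeriodicPt f n x := hx.2.2.1

theorem iterate_mem (hx : PerC a b f n x) (hf : WellBehaved a b f) : ∀ k, f^[k] x ∈ Icc a b
  | 0 => hx.1
  | k + 1 => by
    rw [iterate_succ_apply']
    exact hf.mapsTo ⟨hx.iterate_mem hf k, hx.2.2.2.2 k⟩

theorem iterate_notMem_specPts (hx : PerC a b f n x) (hnc : ¬ CriticalPt a b f n x) (k : ℕ) :
    f^[k] x ∉ SpecPts a b f := by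
  rw [← hx.isPeriodicPt.iterate_mod_apply k]
  rintro (hd | ht)
  · exact hx.2.2.2.2 _ hd
  · exact hnc ⟨_, Nat.mod_lt k hx.2.1, ht⟩

theorem exists_Icc_iterate_continuousOn_strictMono (hx : PerC a b f n x)
    (hf : WellBehaved a b f) (hab : x ∈ Ioo a b) (hnc : ¬ CriticalPt a b f n x) (N : ℕ) :
    ∃ ε > 0, Icc (x - ε) (x + ε) ⊆ Icc a b ∧ ∀ j ≤ N, ContinuousOn f^[j] (Icc (x - ε) (x + ε)) ∧
      (StrictMonoOn f^[j] (Icc (x - ε) (x + ε)) ∨ StrictAntiOn f^[j] (Icc (x - ε) (x + ε))) := by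
  have hnhds : 𝓝[Icc a b] x = 𝓝 x := nhdsWithin_eq_nhds.2 (Icc_mem_nhds hab.1 hab.2)
  have hgerm (j : ℕ) : ∀ᶠ V in (𝓝 x).smallSets, ContinuousOn f^[j] V ∧ InjOn f^[j] V := by
    obtain ⟨U, hU, -, hc, hi⟩ := ContInjNear.iterate
      (fun k => hf.contInjNear (hx.iterate_mem hf k) (hx.iterate_notMem_specPts hnc k))
      (hx.iterate_mem hf) j
    exact (eventually_smallSets_subset.2 (hnhds ▸ hU)).mono fun V hV => ⟨hc.mono hV, hi.mono hV⟩
  have hall : ∀ᶠ V in (𝓝 x).smallSets,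
      V ⊆ Icc a b ∧ ∀ j ∈ {j | j ≤ N}, ContinuousOn f^[j] V ∧ InjOn f^[j] V :=
    (eventually_smallSets_subset.2 (Icc_mem_nhds hab.1 hab.2)).and
      ((eventually_all_finite (finite_le_nat N)).2 fun j _ => hgerm j)
  obtain ⟨ε, hε, hV⟩ := (nhds_basis_Icc_pos x).smallSets.eventually_iff.1 hall
  obtain ⟨hsub, hreg⟩ := hV (Subset.refl _)
  exact ⟨ε, hε, hsub, fun j hj =>
    ⟨(hreg j hj).1, (hreg j hj).1.strictMonoOn_of_injOn_Icc' (by linarith) (hreg j hj).2⟩⟩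

end PerC

/-- **Proposition 5.** A non-critical unstable continuous periodic point in `(a,b)`
is trapped. -/
theorem unstable_trapped (a b : ℝ) (f : ℝ → ℝ) (hf : WellBehaved a b f)
    (n : ℕ) (x : ℝ) (hx : PerC a b f n x) (hab : x ∈ Set.Ioo a b)
    (hnc : ¬ CriticalPt a b f n x) (hu : Unstable a b f x) :
    Trapped a b f n x := by
  have hn : 0 < 2 * n := by have := hx.2.1; omega
  obtain ⟨ε, hε, hWab, hW⟩ := hx.exists_Icc_iterate_continuousOn_strictMono hf hab hnc (2 * n)
  have hcont : ∀ r < 2 * n, ContinuousAt f^[r] x := fun r hr =>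
    (hW r hr.le).1.continuousAt (Icc_mem_nhds (by linarith) (by linarith))
  obtain ⟨ρ, hρ, hρε, hG⟩ :=
    exists_Icc_strictMonoOn_comp_self hε hx.isPeriodicPt (hW n (by omega)).1 (hW n (by omega)).2
  rw [← iterate_add, ← two_mul] at hG
  have hhalf : Icc (x - ρ / 2) (x + ρ / 2) ⊆ Icc (x - ρ) (x + ρ) :=
    Icc_subset_Icc (by linarith) (by linarith)
  obtain ⟨y, hy, z, hz, hyG, hzG⟩ := hu.exists_trapping_points hn hcont (half_pos hρ)
    (hhalf.trans (hρε.trans hWab)) ((hW _ le_rfl).1.mono (hhalf.trans hρε))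
    (hG.monotoneOn.mono hhalf) (hx.isPeriodicPt.const_mul 2)
  refine ⟨_, Icc_mem_nhds (by linarith) (by linarith), hWab, hW,
    y, hρε (hhalf ⟨hy.1, by linarith [hy.2]⟩), z, hρε (hhalf ⟨by linarith [hz.1], hz.2⟩),
    ρ / 2, half_pos hρ, hy.2, hz.1,
    hG.mono (Icc_subset_Icc (by linarith [hy.1]) (by linarith [hz.2])), hyG, hzG⟩
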